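/- Let a be a positive definite Hermitian 2×2 complex matrix with A = det a > 0 and 𝔸 = A + (Im a₁₂)². For every (y, μ) ∈ ℝ² × ℝ with ϱ = √((A/𝔸)Qℝ(y) + Aμ²) > 0, the integral ∫_{ℝ²} ( Q(x₁ + iy₁, x₂ + iy₂) + Aμ² )^{−3/2} dx₁ dx₂ converges and equals 2π/(√𝔸 · ϱ). -/

import Mathlib

open MeasureTheory

/-- The Hermitian form `Q(w) = a₁₁|w₁|² + a₂₂|w₂|² + 2Re(a₁₂ w₁ conj(w₂))`. -/
noncomputable def Qh (a11 a22 : ℝ) (a12 w1 w2 : ℂ) : ℝ :=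
  a11 * Complex.normSq w1 + a22 * Complex.normSq w2 + 2 * (a12 * w1 * (starRingEnd ℂ) w2).re

/-- The real quadratic form `Qℝ(y) = a₁₁y₁² + 2Re(a₁₂)y₁y₂ + a₂₂y₂²`. -/
noncomputable def QR (a11 a22 : ℝ) (a12 : ℂ) (y1 y2 : ℝ) : ℝ :=
  a11 * y1 ^ 2 + 2 * a12.re * y1 * y2 + a22 * y2 ^ 2

/-!
Completing the square twice writes `Q(x + iy) + Aμ²` as `(s x₁ + ℓ(x₂))² + ((b x₂ + e)² + ϱ²)`
with `s = √a₁₁`, `b = √𝔸 / √a₁₁` and `ℓ` affine. Integrating first in `x₁` with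
`∫ (1 + t²)^(-3/2) dt = 2` (antiderivative `t / √(1 + t²)`) leaves
`(2 / s) ∫ ((b x₂ + e)² + ϱ²)⁻¹ dx₂ = 2π / (s b ϱ)`, and `s b = √𝔸`.
-/

open Real Filter Topology

lemma rpow_neg_three_halves_eq_inv_sqrt_pow {x : ℝ} (hx : 0 ≤ x) :
    x ^ (-(3 : ℝ) / 2) = (√x ^ 3)⁻¹ := by
  rw [sqrt_eq_rpow, ← rpow_natCast, ← rpow_mul hx, ← rpow_neg hx]
  norm_num

lemma hasDerivAt_div_sqrt_one_add_sq (t : ℝ) :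
    HasDerivAt (fun t : ℝ => t / √(1 + t ^ 2)) ((1 + t ^ 2) ^ (-(3 : ℝ) / 2)) t := by
  have hpos : 0 < 1 + t ^ 2 := by positivity
  have hsqrt : HasDerivAt (fun t : ℝ => √(1 + t ^ 2)) (t / √(1 + t ^ 2)) t := by
    convert ((hasDerivAt_pow 2 t).const_add 1).sqrt hpos.ne' using 1
    field_simp
    ring
  refine ((hasDerivAt_id t).div hsqrt (sqrt_pos.mpr hpos).ne').congr_deriv ?_
  rw [rpow_neg_three_halves_eq_inv_sqrt_pow hpos.le]
  field_simp
  rw [id, sq_sqrt hpos.le]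
  ring

lemma tendsto_div_sqrt_one_add_sq_atTop :
    Tendsto (fun t : ℝ => t / √(1 + t ^ 2)) atTop (𝓝 1) := by
  have hinv := (tendsto_atTop_add_const_left _ 1
    (tendsto_pow_atTop (α := ℝ) two_ne_zero)).inv_tendsto_atTop
  have hsqrt : Tendsto (fun t : ℝ => √(1 - (1 + t ^ 2)⁻¹)) atTop (𝓝 1) := by
    simpa using (hinv.const_sub 1).sqrt
  refine hsqrt.congr' ?_
  filter_upwards [eventually_ge_atTop 0] with t ht
  have hpos : 0 < 1 + t ^ 2 := by positivity
  rw [show 1 - (1 + t ^ 2)⁻¹ = t ^ 2 / (1 + t ^ 2) by field_simp; ring,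
    sqrt_div (sq_nonneg t), sqrt_sq ht]

lemma tendsto_div_sqrt_one_add_sq_atBot :
    Tendsto (fun t : ℝ => t / √(1 + t ^ 2)) atBot (𝓝 (-1)) := by
  refine ((tendsto_div_sqrt_one_add_sq_atTop.comp tendsto_neg_atBot_atTop).neg).congr fun t => ?_
  simp [neg_div]

lemma integrable_one_add_sq_rpow_neg_three_halves :
    Integrable (fun t : ℝ => (1 + t ^ 2) ^ (-(3 : ℝ) / 2)) := by
  simpa [sq_abs] using integrable_rpow_neg_one_add_norm_sq (E := ℝ) (μ := volume) (r := 3)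
    (by norm_num)

lemma integral_one_add_sq_rpow_neg_three_halves :
    ∫ t : ℝ, (1 + t ^ 2) ^ (-(3 : ℝ) / 2) = 2 := by
  rw [integral_of_hasDerivAt_of_tendsto hasDerivAt_div_sqrt_one_add_sq
    integrable_one_add_sq_rpow_neg_three_halves tendsto_div_sqrt_one_add_sq_atBot
    tendsto_div_sqrt_one_add_sq_atTop]
  norm_num

lemma integral_comp_mul_add {E : Type*} [NormedAddCommGroup E] [NormedSpace ℝ E]
    (f : ℝ → E) (s d : ℝ) : ∫ x, f (s * x + d) = |s|⁻¹ • ∫ x, f x := by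
  rw [Measure.integral_comp_mul_left (fun u => f (u + d)), integral_add_right_eq_self, abs_inv]

lemma sq_add_eq_mul_one_add_sq {c : ℝ} (hc : 0 < c) (s d x : ℝ) :
    (s * x + d) ^ 2 + c = c * (1 + (s / √c * x + d / √c) ^ 2) := by
  have := sq_sqrt hc.le
  field_simp
  rw [this]
  ring

section Affine

variable {c s d : ℝ}

lemma sq_add_rpow_neg_three_halves_eq (hc : 0 < c) (x : ℝ) :
    ((s * x + d) ^ 2 + c) ^ (-(3 : ℝ) / 2) =
      c ^ (-(3 : ℝ) / 2) * (1 + (s / √c * x + d / √c) ^ 2) ^ (-(3 : ℝ) / 2) := by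
  rw [sq_add_eq_mul_one_add_sq hc, mul_rpow hc.le (by positivity)]

lemma integrable_sq_add_rpow_neg_three_halves (hc : 0 < c) (hs : s ≠ 0) :
    Integrable (fun x : ℝ => ((s * x + d) ^ 2 + c) ^ (-(3 : ℝ) / 2)) := by
  simp_rw [sq_add_rpow_neg_three_halves_eq hc]
  exact ((integrable_one_add_sq_rpow_neg_three_halves.comp_add_right _).comp_mul_left'
    (div_ne_zero hs (sqrt_pos.mpr hc).ne')).const_mul _

lemma integral_sq_add_rpow_neg_three_halves (hc : 0 < c) (hs : s ≠ 0) :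
    ∫ x : ℝ, ((s * x + d) ^ 2 + c) ^ (-(3 : ℝ) / 2) = 2 / (|s| * c) := by
  simp_rw [sq_add_rpow_neg_three_halves_eq hc]
  rw [integral_const_mul, integral_comp_mul_add (fun u => (1 + u ^ 2) ^ (-(3 : ℝ) / 2)),
    integral_one_add_sq_rpow_neg_three_halves, rpow_neg_three_halves_eq_inv_sqrt_pow hc.le,
    smul_eq_mul, abs_div, abs_of_pos (sqrt_pos.mpr hc)]
  have := sqrt_pos.mpr hc
  field_simp
  rw [sq_sqrt hc.le]

lemma integrable_sq_add_inv (hc : 0 < c) (hs : s ≠ 0) :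
    Integrable (fun x : ℝ => ((s * x + d) ^ 2 + c)⁻¹) := by
  simp_rw [sq_add_eq_mul_one_add_sq hc, mul_inv]
  exact ((integrable_inv_one_add_sq.comp_add_right _).comp_mul_left'
    (div_ne_zero hs (sqrt_pos.mpr hc).ne')).const_mul _

lemma integral_sq_add_inv (hc : 0 < c) (hs : s ≠ 0) :
    ∫ x : ℝ, ((s * x + d) ^ 2 + c)⁻¹ = π / (|s| * √c) := by
  simp_rw [sq_add_eq_mul_one_add_sq hc, mul_inv]
  rw [integral_const_mul, integral_comp_mul_add (fun u => (1 + u ^ 2)⁻¹),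
    integral_univ_inv_one_add_sq, smul_eq_mul, abs_div, abs_of_pos (sqrt_pos.mpr hc)]
  have := sqrt_pos.mpr hc
  field_simp
  rw [sq_sqrt hc.le]

end Affine

section TwoSquares

variable {s b p q e P : ℝ}

lemma integrable_sq_add_sq_add_rpow_neg_three_halves (hs : s ≠ 0) (hb : b ≠ 0) (hP : 0 < P) :
    Integrable (fun x : ℝ × ℝ =>
      ((s * x.1 + (p * x.2 + q)) ^ 2 + ((b * x.2 + e) ^ 2 + P)) ^ (-(3 : ℝ) / 2)) := by
  have hc (y : ℝ) : 0 < (b * y + e) ^ 2 + P := by positivity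
  have hpos (x : ℝ × ℝ) : 0 < (s * x.1 + (p * x.2 + q)) ^ 2 + ((b * x.2 + e) ^ 2 + P) :=
    add_pos_of_nonneg_of_pos (sq_nonneg _) (hc x.2)
  have hcont : Continuous (fun x : ℝ × ℝ =>
      ((s * x.1 + (p * x.2 + q)) ^ 2 + ((b * x.2 + e) ^ 2 + P)) ^ (-(3 : ℝ) / 2)) :=
    (by fun_prop : Continuous _).rpow_const fun x => .inl (hpos x).ne'
  rw [Measure.volume_eq_prod, integrable_prod_iff' hcont.aestronglyMeasurable]
  refine ⟨.of_forall fun y =>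
    integrable_sq_add_rpow_neg_three_halves (d := p * y + q) (hc y) hs, ?_⟩
  simp_rw [norm_of_nonneg (rpow_nonneg (hpos (_, _)).le _),
    integral_sq_add_rpow_neg_three_halves (d := p * _ + q) (hc _) hs, div_mul_eq_div_div,
    div_eq_mul_inv (2 / |s|)]
  exact (integrable_sq_add_inv hP hb).const_mul _

lemma integral_sq_add_sq_add_rpow_neg_three_halves (hs : s ≠ 0) (hb : b ≠ 0) (hP : 0 < P) :
    ∫ x : ℝ × ℝ, ((s * x.1 + (p * x.2 + q)) ^ 2 + ((b * x.2 + e) ^ 2 + P)) ^ (-(3 : ℝ) / 2) =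
      2 * π / (|s| * |b| * √P) := by
  have hc (y : ℝ) : 0 < (b * y + e) ^ 2 + P := by positivity
  have hint :=
    integrable_sq_add_sq_add_rpow_neg_three_halves (p := p) (q := q) (e := e) hs hb hP
  rw [Measure.volume_eq_prod] at hint ⊢
  rw [integral_prod_symm _ hint]
  simp_rw [integral_sq_add_rpow_neg_three_halves (d := p * _ + q) (hc _) hs, div_mul_eq_div_div,
    div_eq_mul_inv (2 / |s|)]
  rw [integral_const_mul, integral_sq_add_inv hP hb]
  ring

end TwoSquares

lemma Qh_add_eq_sq_add_sq {a11 a22 : ℝ} {a12 : ℂ} {s r : ℝ} (hs : s ≠ 0) (hr : r ≠ 0)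
    (hs2 : s ^ 2 = a11) (hr2 : r ^ 2 = a11 * a22 - Complex.normSq a12 + a12.im ^ 2)
    (y1 y2 μ x1 x2 : ℝ) :
    Qh a11 a22 a12 ((x1 : ℂ) + (y1 : ℂ) * Complex.I) ((x2 : ℂ) + (y2 : ℂ) * Complex.I)
        + (a11 * a22 - Complex.normSq a12) * μ ^ 2 =
      (s * x1 + (a12.re / s * x2 + a12.im * y2 / s)) ^ 2
        + ((r / s * x2 + -(a12.im * (a11 * y1 + a12.re * y2) / (r * s))) ^ 2
          + ((a11 * a22 - Complex.normSq a12) / (a11 * a22 - Complex.normSq a12 + a12.im ^ 2)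
              * QR a11 a22 a12 y1 y2 + (a11 * a22 - Complex.normSq a12) * μ ^ 2)) := by
  subst hs2
  rw [← hr2]
  obtain rfl : a22 = (r ^ 2 + a12.re ^ 2) / s ^ 2 := by
    rw [Complex.normSq_apply] at hr2
    field_simp
    linear_combination -hr2
  simp only [Qh, QR, Complex.normSq_apply, Complex.add_re, Complex.add_im, Complex.mul_re,
    Complex.mul_im, Complex.I_re, Complex.I_im, Complex.ofReal_re, Complex.ofReal_im,
    Complex.conj_re, Complex.conj_im]
  field_simp
  ring

theorem statement12_general (a11 a22 : ℝ) (a12 : ℂ) (ha11 : 0 < a11)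
    (hA : 0 < a11 * a22 - Complex.normSq a12) (y1 y2 μ : ℝ)
    (hrho : 0 < Real.sqrt (((a11 * a22 - Complex.normSq a12) /
        (a11 * a22 - Complex.normSq a12 + a12.im ^ 2)) * QR a11 a22 a12 y1 y2
      + (a11 * a22 - Complex.normSq a12) * μ ^ 2)) :
    Integrable (fun x : ℝ × ℝ =>
      (Qh a11 a22 a12 ((x.1 : ℂ) + (y1 : ℂ) * Complex.I) ((x.2 : ℂ) + (y2 : ℂ) * Complex.I)
        + (a11 * a22 - Complex.normSq a12) * μ ^ 2) ^ (-(3 : ℝ) / 2)) ∧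
    (∫ x : ℝ × ℝ,
      (Qh a11 a22 a12 ((x.1 : ℂ) + (y1 : ℂ) * Complex.I) ((x.2 : ℂ) + (y2 : ℂ) * Complex.I)
        + (a11 * a22 - Complex.normSq a12) * μ ^ 2) ^ (-(3 : ℝ) / 2))
      = 2 * Real.pi / (Real.sqrt (a11 * a22 - Complex.normSq a12 + a12.im ^ 2) *
          Real.sqrt (((a11 * a22 - Complex.normSq a12) /
              (a11 * a22 - Complex.normSq a12 + a12.im ^ 2)) * QR a11 a22 a12 y1 y2
            + (a11 * a22 - Complex.normSq a12) * μ ^ 2)) := by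
  have h𝔸 : 0 < a11 * a22 - Complex.normSq a12 + a12.im ^ 2 :=
    add_pos_of_pos_of_nonneg hA (sq_nonneg _)
  have hs := sqrt_pos.mpr ha11
  have hr := sqrt_pos.mpr h𝔸
  simp_rw [Qh_add_eq_sq_add_sq hs.ne' hr.ne' (sq_sqrt ha11.le) (sq_sqrt h𝔸.le) y1 y2 μ]
  have hP := sqrt_pos.mp hrho
  refine ⟨integrable_sq_add_sq_add_rpow_neg_three_halves hs.ne' (div_pos hr hs).ne' hP, ?_⟩
  rw [integral_sq_add_sq_add_rpow_neg_three_halves hs.ne' (div_pos hr hs).ne' hP,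
    abs_of_pos hs, abs_of_pos (div_pos hr hs)]
  field_simp

/-- the fibrewise integral of the Newtonian kernel:
`∫_{ℝ²} (Q(x₁+iy₁, x₂+iy₂) + Aμ²)^{−3/2} dx₁dx₂ = 2π/(√𝔸·ϱ)` whenever `ϱ > 0`,
where `A = det a`, `𝔸 = A + (Im a₁₂)²` and `ϱ = √((A/𝔸)Qℝ(y) + Aμ²)`. -/
theorem statement12 (a11 a22 : ℝ) (a12 : ℂ) (ha11 : 0 < a11) (ha22 : 0 < a22)
    (hA : 0 < a11 * a22 - Complex.normSq a12) (y1 y2 μ : ℝ)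
    (hrho : 0 < Real.sqrt (((a11 * a22 - Complex.normSq a12) /
        (a11 * a22 - Complex.normSq a12 + a12.im ^ 2)) * QR a11 a22 a12 y1 y2
      + (a11 * a22 - Complex.normSq a12) * μ ^ 2)) :
    Integrable (fun x : ℝ × ℝ =>
      (Qh a11 a22 a12 ((x.1 : ℂ) + (y1 : ℂ) * Complex.I) ((x.2 : ℂ) + (y2 : ℂ) * Complex.I)
        + (a11 * a22 - Complex.normSq a12) * μ ^ 2) ^ (-(3 : ℝ) / 2)) ∧
    (∫ x : ℝ × ℝ,
      (Qh a11 a22 a12 ((x.1 : ℂ) + (y1 : ℂ) * Complex.I) ((x.2 : ℂ) + (y2 : ℂ) * Complex.I)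
        + (a11 * a22 - Complex.normSq a12) * μ ^ 2) ^ (-(3 : ℝ) / 2))
      = 2 * Real.pi / (Real.sqrt (a11 * a22 - Complex.normSq a12 + a12.im ^ 2) *
          Real.sqrt (((a11 * a22 - Complex.normSq a12) /
              (a11 * a22 - Complex.normSq a12 + a12.im ^ 2)) * QR a11 a22 a12 y1 y2
            + (a11 * a22 - Complex.normSq a12) * μ ^ 2)) :=
  statement12_general a11 a22 a12 ha11 hA y1 y2 μ hrho
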